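/- arXiv:2312.04045 — 3 statements merged into one kernel-verified Lean document; each statement's English description precedes it below -/
import Mathlib

section
/- Let q₁, q₂ > 0, K > 0, and c ∈ (0,1). Define G(y) := q₂/y + q₁/(1 − y) + (q₁ − q₂) log( y/(1 − y) ) − ( q₂/c + q₁/(1 − c) + (q₁ − q₂) log( c/(1 − c) ) ) for y ∈ (0,1). Then the limit as x → 1⁻ of ∫_c^x exp( K · G(y) ) dy equals +∞. In particular, for c < x < 1, ∫_c^x exp( K · G(y) ) dy ≥ K ( q₂ log(x) − q₁ log(1 − x) + (q₁ − q₂)( x log(x) + (1 − x) log(1 − x) ) − C ) for a constant C depending only on q₁, q₂, c, and the lower bound tends to +∞ as x → 1⁻. -/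
/-!
Since `exp t ≥ t`, the scale integral dominates `K ∫_c^x G`. Writing `G(y) = Φ(y) - Φ(c)`, the
potential `Φ` has the explicit antiderivative
`P(y) = q₂ log y - q₁ log (1 - y) + (q₁ - q₂) (y log y + (1 - y) log (1 - y))`,
so `∫_c^x G = P(x) - P(c) - Φ(c) (x - c)`, where the last term is bounded by `|Φ(c)|` on
`[c, 1)`.
As `x → 1⁻` every term of `P` stays bounded except `-q₁ log (1 - x) → +∞`.
-/

open Filter intervalIntegral

/-- The explicit value of the inner integral in the scale function of the
mean-reverting filter SDE. -/
noncomputable def scaleExponent (q₁ q₂ c : ℝ) (y : ℝ) : ℝ :=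
  q₂ / y + q₁ / (1 - y) + (q₁ - q₂) * Real.log (y / (1 - y))
    - (q₂ / c + q₁ / (1 - c) + (q₁ - q₂) * Real.log (c / (1 - c)))

open Set Topology Real

theorem intervalIntegral.integral_le_integral_exp {f : ℝ → ℝ} {a b : ℝ} (hab : a ≤ b)
    (hf : ContinuousOn f (uIcc a b)) : ∫ y in a..b, f y ≤ ∫ y in a..b, exp (f y) :=
  integral_mono_on hab hf.intervalIntegrable
    (continuous_exp.comp_continuousOn hf).intervalIntegrable
    fun y _ => (le_add_of_nonneg_right zero_le_one).trans (add_one_le_exp (f y))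

noncomputable def scalePotential (q₁ q₂ y : ℝ) : ℝ :=
  q₂ / y + q₁ / (1 - y) + (q₁ - q₂) * log (y / (1 - y))

noncomputable def scalePotentialAntideriv (q₁ q₂ x : ℝ) : ℝ :=
  q₂ * log x - q₁ * log (1 - x) + (q₁ - q₂) * (x * log x + (1 - x) * log (1 - x))

variable {q₁ q₂ : ℝ}

theorem scaleExponent_eq_sub (c y : ℝ) :
    scaleExponent q₁ q₂ c y = scalePotential q₁ q₂ y - scalePotential q₁ q₂ c := rfl

theorem continuousOn_scalePotential : ContinuousOn (scalePotential q₁ q₂) (Ioo 0 1) := by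
  have hy : ∀ y ∈ Ioo (0 : ℝ) 1, y ≠ 0 := fun y hy => hy.1.ne'
  have hy' : ∀ y ∈ Ioo (0 : ℝ) 1, 1 - y ≠ 0 := fun y hy => (sub_pos.2 hy.2).ne'
  unfold scalePotential
  fun_prop (disch := first | assumption | exact fun y h => div_ne_zero (hy y h) (hy' y h))

theorem hasDerivAt_scalePotentialAntideriv {y : ℝ} (hy : y ∈ Ioo 0 1) :
    HasDerivAt (scalePotentialAntideriv q₁ q₂) (scalePotential q₁ q₂ y) y := by
  have hy₀ : y ≠ 0 := hy.1.ne'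
  have hy₁ : 1 - y ≠ 0 := (sub_pos.2 hy.2).ne'
  have hlog : HasDerivAt log y⁻¹ y := hasDerivAt_log hy₀
  have hlog₁ : HasDerivAt (fun x => log (1 - x)) (-1 / (1 - y)) y :=
    ((hasDerivAt_id' y).const_sub 1).log hy₁
  unfold scalePotentialAntideriv
  have h := ((hlog.const_mul q₂).sub (hlog₁.const_mul q₁)).add
    ((((hasDerivAt_id' y).mul hlog).add (((hasDerivAt_id' y).const_sub 1).mul hlog₁)).const_mul
      (q₁ - q₂))
  refine h.congr_deriv ?_
  rw [scalePotential, log_div hy₀ hy₁]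
  field_simp
  ring

theorem integral_scaleExponent {c x : ℝ} (hc : 0 < c) (hcx : c ≤ x) (hx : x < 1) :
    ∫ y in c..x, scaleExponent q₁ q₂ c y =
      scalePotentialAntideriv q₁ q₂ x - scalePotentialAntideriv q₁ q₂ c
        - scalePotential q₁ q₂ c * (x - c) := by
  have hsub : uIcc c x ⊆ Ioo 0 1 := by
    rw [uIcc_of_le hcx]
    exact Icc_subset_Ioo hc hx
  have hint : IntervalIntegrable (scalePotential q₁ q₂) MeasureTheory.volume c x :=
    (continuousOn_scalePotential.mono hsub).intervalIntegrable
  simp only [scaleExponent_eq_sub]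
  rw [integral_sub hint intervalIntegrable_const,
    integral_eq_sub_of_hasDerivAt (fun y hy => hasDerivAt_scalePotentialAntideriv (hsub hy)) hint]
  simp only [integral_const, smul_eq_mul]
  ring

theorem integral_exp_scaleExponent_ge {K c x : ℝ} (hK : 0 ≤ K) (hc : 0 < c) (hcx : c ≤ x)
    (hx : x < 1) :
    K * (scalePotentialAntideriv q₁ q₂ x
        - (scalePotentialAntideriv q₁ q₂ c + |scalePotential q₁ q₂ c|)) ≤
      ∫ y in c..x, exp (K * scaleExponent q₁ q₂ c y) := by
  have hsub : uIcc c x ⊆ Ioo 0 1 := by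
    rw [uIcc_of_le hcx]
    exact Icc_subset_Ioo hc hx
  have hcont : ContinuousOn (fun y => K * scaleExponent q₁ q₂ c y) (uIcc c x) :=
    ((continuousOn_scalePotential.mono hsub).sub continuousOn_const).const_smul K
  have hdrift : scalePotential q₁ q₂ c * (x - c) ≤ |scalePotential q₁ q₂ c| := by
    calc scalePotential q₁ q₂ c * (x - c) ≤ |scalePotential q₁ q₂ c| * (x - c) :=
          mul_le_mul_of_nonneg_right (le_abs_self _) (by linarith)
      _ ≤ |scalePotential q₁ q₂ c| :=
          mul_le_of_le_one_right (abs_nonneg _) (by linarith)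
  calc K * (scalePotentialAntideriv q₁ q₂ x
        - (scalePotentialAntideriv q₁ q₂ c + |scalePotential q₁ q₂ c|))
      ≤ K * ∫ y in c..x, scaleExponent q₁ q₂ c y := by
        rw [integral_scaleExponent hc hcx hx]
        exact mul_le_mul_of_nonneg_left (by linarith) hK
    _ = ∫ y in c..x, K * scaleExponent q₁ q₂ c y := (integral_const_mul K _).symm
    _ ≤ ∫ y in c..x, exp (K * scaleExponent q₁ q₂ c y) := integral_le_integral_exp hcx hcont

theorem tendsto_scalePotentialAntideriv_nhdsLT_one (hq₁ : 0 < q₁) :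
    Tendsto (scalePotentialAntideriv q₁ q₂) (𝓝[<] 1) atTop := by
  have hbounded : ContinuousAt
      (fun x => q₂ * log x + (q₁ - q₂) * (x * log x + (1 - x) * log (1 - x))) 1 :=
    (continuousAt_const.mul (continuousAt_log one_ne_zero)).add (continuousAt_const.mul
      (continuous_mul_log.continuousAt.add
        (continuous_mul_log.comp (continuous_const.sub continuous_id)).continuousAt))
  have hsub : Tendsto (fun x : ℝ => 1 - x) (𝓝[<] 1) (𝓝[>] 0) := by
    have h := (map_subLeft_nhdsLT (c := (1 : ℝ)) (a := 1)).le
    rwa [sub_self] at h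
  have hsingular : Tendsto (fun x => -(q₁ * log (1 - x))) (𝓝[<] 1) atTop := by
    simpa only [Function.comp_def, mul_neg] using
      (tendsto_neg_atBot_atTop.comp (tendsto_log_nhdsGT_zero.comp hsub)).const_mul_atTop hq₁
  refine ((hbounded.tendsto.mono_left nhdsWithin_le_nhds).add_atTop hsingular).congr fun x => ?_
  simp only [scalePotentialAntideriv]
  ring

theorem scale_function_diverges_at_one_general (q₁ q₂ K c : ℝ)
    (hq₁ : 0 < q₁) (hK : 0 < K) (hc : c ∈ Set.Ioo (0 : ℝ) 1) :
    Tendsto (fun x : ℝ => ∫ y in c..x, Real.exp (K * scaleExponent q₁ q₂ c y))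
      (nhdsWithin 1 (Set.Iio 1)) atTop ∧
    ∃ C : ℝ,
      (∀ x : ℝ, c < x → x < 1 →
        (∫ y in c..x, Real.exp (K * scaleExponent q₁ q₂ c y)) ≥
          K * (q₂ * Real.log x - q₁ * Real.log (1 - x)
            + (q₁ - q₂) * (x * Real.log x + (1 - x) * Real.log (1 - x)) - C)) ∧
      Tendsto (fun x : ℝ => K * (q₂ * Real.log x - q₁ * Real.log (1 - x)
            + (q₁ - q₂) * (x * Real.log x + (1 - x) * Real.log (1 - x)) - C))
        (nhdsWithin 1 (Set.Iio 1)) atTop := by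
  set C := scalePotentialAntideriv q₁ q₂ c + |scalePotential q₁ q₂ c|
  have hbound : ∀ x, c < x → x < 1 →
      K * (scalePotentialAntideriv q₁ q₂ x - C) ≤
        ∫ y in c..x, exp (K * scaleExponent q₁ q₂ c y) :=
    fun x hcx hx => integral_exp_scaleExponent_ge hK.le hc.1 hcx.le hx
  have hlim : Tendsto (fun x => K * (scalePotentialAntideriv q₁ q₂ x - C)) (𝓝[<] 1) atTop :=
    (tendsto_atTop_add_const_right _ (-C)
      (tendsto_scalePotentialAntideriv_nhdsLT_one (q₂ := q₂) hq₁)).const_mul_atTop hK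
  refine ⟨tendsto_atTop_mono' _ ?_ hlim, C, hbound, hlim⟩
  filter_upwards [self_mem_nhdsWithin, (eventually_gt_nhds hc.2).filter_mono nhdsWithin_le_nhds]
    with x hx hcx
  exact hbound x hcx hx

/-- Divergence of the scale function at the right endpoint: `p(x) = ∫_c^x exp(K G(y)) dy`
tends to `+∞` as `x → 1⁻`; in particular the integral dominates the explicit expression
`K (q₂ log x - q₁ log(1-x) + (q₁-q₂)(x log x + (1-x) log(1-x)) - C)` for a constant `C`
depending only on `q₁, q₂, c`, and this lower bound tends to `+∞` as `x → 1⁻`. -/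
theorem scale_function_diverges_at_one (q₁ q₂ K c : ℝ)
    (hq₁ : 0 < q₁) (hq₂ : 0 < q₂) (hK : 0 < K) (hc : c ∈ Set.Ioo (0 : ℝ) 1) :
    Tendsto (fun x : ℝ => ∫ y in c..x, Real.exp (K * scaleExponent q₁ q₂ c y))
      (nhdsWithin 1 (Set.Iio 1)) atTop ∧
    ∃ C : ℝ,
      (∀ x : ℝ, c < x → x < 1 →
        (∫ y in c..x, Real.exp (K * scaleExponent q₁ q₂ c y)) ≥
          K * (q₂ * Real.log x - q₁ * Real.log (1 - x)
            + (q₁ - q₂) * (x * Real.log x + (1 - x) * Real.log (1 - x)) - C)) ∧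
      Tendsto (fun x : ℝ => K * (q₂ * Real.log x - q₁ * Real.log (1 - x)
            + (q₁ - q₂) * (x * Real.log x + (1 - x) * Real.log (1 - x)) - C))
        (nhdsWithin 1 (Set.Iio 1)) atTop :=
  scale_function_diverges_at_one_general q₁ q₂ K c hq₁ hK hc
end

section
/- Let q₁, q₂ > 0, K > 0, and c ∈ (0,1). Define G(y) := q₂/y + q₁/(1 − y) + (q₁ − q₂) log( y/(1 − y) ) − ( q₂/c + q₁/(1 − c) + (q₁ − q₂) log( c/(1 − c) ) ) for y ∈ (0,1). Then the limit as x → 0⁺ of ∫_x^c exp( K · G(y) ) dy equals +∞; equivalently, the scale function p(x) = ∫_c^x exp( K · G(y) ) dy (a signed integral, negative for x < c) satisfies p(0+) = −∞. -/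
open Filter intervalIntegral

/-- Divergence of the scale function at the left endpoint: `∫_x^c exp(K G(y)) dy`
tends to `+∞` as `x → 0⁺`; equivalently, the scale function
`p(x) = ∫_c^x exp(K G(y)) dy` (a signed integral, negative for `x < c`)
satisfies `p(0+) = -∞`. -/
theorem scale_function_diverges_at_zero (q₁ q₂ K c : ℝ)
    (hq₁ : 0 < q₁) (hq₂ : 0 < q₂) (hK : 0 < K) (hc : c ∈ Set.Ioo (0 : ℝ) 1) :
    Tendsto (fun x : ℝ => ∫ y in x..c, Real.exp (K * scaleExponent q₁ q₂ c y))
      (nhdsWithin 0 (Set.Ioi 0)) atTop ∧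
    Tendsto (fun x : ℝ => ∫ y in c..x, Real.exp (K * scaleExponent q₁ q₂ c y))
      (nhdsWithin 0 (Set.Ioi 0)) atBot := by
  obtain ⟨hc0, hc1⟩ := hc
  set f : ℝ → ℝ := fun y => Real.exp (K * scaleExponent q₁ q₂ c y) with hf
  set C₀ : ℝ := q₂ / c + q₁ / (1 - c) + (q₁ - q₂) * Real.log (c / (1 - c)) with hC₀
  set A : ℝ := Real.exp (-(K * C₀)) * (K * q₂ / 2) with hA
  have hApos : 0 < A := by positivity
  set M : ℝ := |q₁ - q₂| + 1 with hM
  have hMpos : 0 < M := by positivity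
  set δ : ℝ := min (min c (1/2)) ((q₂ / (4*M))^2) with hδ
  have hδpos : 0 < δ := by
    apply lt_min (lt_min hc0 (by norm_num))
    positivity
  have hδc : δ ≤ c := le_trans (min_le_left _ _) (min_le_left _ _)
  have hδhalf : δ ≤ 1/2 := le_trans (min_le_left _ _) (min_le_right _ _)
  have hδsq : δ ≤ (q₂ / (4*M))^2 := min_le_right _ _
  clear_value C₀ A M δ
  -- pointwise bound on (0, δ]
  have key : ∀ y ∈ Set.Ioc (0:ℝ) δ, A / y ≤ f y := by
    rintro y ⟨hy0, hyδ⟩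
    have hy1 : y ≤ 1/2 := hyδ.trans hδhalf
    have h1y : 0 < 1 - y := by linarith
    have hsypos : 0 < Real.sqrt y := Real.sqrt_pos.mpr hy0
    have hys : Real.sqrt y * Real.sqrt y = y := Real.mul_self_sqrt hy0.le
    have hsy : Real.sqrt y ≤ q₂ / (4*M) := by
      have := Real.sqrt_le_sqrt (hyδ.trans hδsq)
      rwa [Real.sqrt_sq (by positivity)] at this
    have hq : (1:ℝ) ≤ (1-y)/y := by
      rw [le_div_iff₀ hy0]; linarith
    have hL0 : 0 ≤ Real.log ((1-y)/y) := Real.log_nonneg hq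
    have hLsqrt : Real.log ((1-y)/y) ≤ 2 * Real.sqrt ((1-y)/y) := by
      have h1 : Real.log (Real.sqrt ((1-y)/y)) ≤ Real.sqrt ((1-y)/y) - 1 :=
        Real.log_le_sub_one_of_pos (Real.sqrt_pos.mpr (by positivity))
      rw [Real.log_sqrt (by positivity)] at h1
      linarith
    have hsqle : Real.sqrt ((1-y)/y) ≤ 1 / Real.sqrt y := by
      have h2 : (1-y)/y ≤ 1/y := by gcongr <;> linarith
      calc Real.sqrt ((1-y)/y) ≤ Real.sqrt (1/y) := Real.sqrt_le_sqrt h2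
        _ = 1 / Real.sqrt y := by
            rw [one_div, Real.sqrt_inv, one_div]
    have hL : Real.log ((1-y)/y) ≤ 2 / Real.sqrt y := by
      calc Real.log ((1-y)/y) ≤ 2 * Real.sqrt ((1-y)/y) := hLsqrt
        _ ≤ 2 * (1 / Real.sqrt y) := by linarith
        _ = 2 / Real.sqrt y := by ring
    -- M * (2/√y) ≤ q₂/(2y)
    have h4 : 4 * M * Real.sqrt y ≤ q₂ := by
      rw [le_div_iff₀ (by positivity)] at hsy
      linarith [hsy]
    have hsy2 : M * (2 / Real.sqrt y) ≤ q₂ / (2*y) := by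
      rw [mul_div_assoc', div_le_div_iff₀ hsypos (by positivity)]
      nlinarith [mul_le_mul_of_nonneg_right h4 hsypos.le, hys]
    -- G lower bound: scaleExponent ≥ q₂/(2y) - C₀
    have hlogbd : -(q₂ / (2*y)) ≤ (q₁ - q₂) * Real.log (y / (1-y)) := by
      have hlog : Real.log (y/(1-y)) = - Real.log ((1-y)/y) := by
        rw [← Real.log_inv]; congr 1; field_simp
      rw [hlog]
      have habs : (q₁ - q₂) * -Real.log ((1-y)/y) ≥ -(M * Real.log ((1-y)/y)) := by
        have h1 : |q₁ - q₂| ≤ M := by rw [hM]; linarith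
        nlinarith [abs_le.mp (le_refl |q₁ - q₂|), neg_abs_le (q₁ - q₂), le_abs_self (q₁ - q₂)]
      have h2 : M * Real.log ((1-y)/y) ≤ q₂ / (2*y) := by
        calc M * Real.log ((1-y)/y) ≤ M * (2 / Real.sqrt y) := by
              apply mul_le_mul_of_nonneg_left hL hMpos.le
          _ ≤ q₂ / (2*y) := hsy2
      linarith
    have hG : q₂ / (2*y) - C₀ ≤ scaleExponent q₁ q₂ c y := by
      unfold scaleExponent
      rw [← hC₀]
      have ha : 0 ≤ q₂ / (2*y) := by positivity
      have hdbl : q₂ / (2*y) + q₂ / (2*y) = q₂ / y := by field_simp; ring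
      have hq1 : 0 ≤ q₁ / (1 - y) := by positivity
      linarith
    -- exponential bound
    have hexp : A / y ≤ f y := by
      have h1 : K * (q₂ / (2*y)) ≤ Real.exp (K * (q₂ / (2*y))) := by
        have := Real.add_one_le_exp (K * (q₂ / (2*y)))
        linarith
      have h2 : Real.exp (K * (q₂/(2*y) - C₀)) ≤ f y := by
        apply Real.exp_le_exp.mpr
        exact mul_le_mul_of_nonneg_left hG hK.le
      calc A / y = Real.exp (-(K * C₀)) * (K * (q₂ / (2*y))) := by
            rw [hA, mul_div_assoc]; congr 1; ring
        _ ≤ Real.exp (-(K * C₀)) * Real.exp (K * (q₂ / (2*y))) := by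
            apply mul_le_mul_of_nonneg_left h1 (Real.exp_pos _).le
        _ = Real.exp (K * (q₂/(2*y) - C₀)) := by
            rw [← Real.exp_add]; congr 1; ring
        _ ≤ f y := h2
    exact hexp
  -- continuity of f on (0,1)
  have hfpos : ∀ y, 0 < f y := fun y => Real.exp_pos _
  have hcont : ContinuousOn f (Set.Ioo (0:ℝ) 1) := by
    have hne0 : ∀ y ∈ Set.Ioo (0:ℝ) 1, y ≠ 0 := fun y hy => ne_of_gt hy.1
    have hne1 : ∀ y ∈ Set.Ioo (0:ℝ) 1, (1:ℝ) - y ≠ 0 := fun y hy => by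
      have := hy.2; intro h; linarith
    have c1 : ContinuousOn (fun y : ℝ => q₂ / y) (Set.Ioo (0:ℝ) 1) :=
      continuousOn_const.div continuousOn_id hne0
    have c2 : ContinuousOn (fun y : ℝ => q₁ / (1 - y)) (Set.Ioo (0:ℝ) 1) :=
      continuousOn_const.div (continuous_const.sub continuous_id).continuousOn hne1
    have c3 : ContinuousOn (fun y : ℝ => (q₁ - q₂) * Real.log (y / (1 - y))) (Set.Ioo (0:ℝ) 1) := by
      apply continuousOn_const.mul
      apply ContinuousOn.log
        (continuousOn_id.div (continuous_const.sub continuous_id).continuousOn hne1)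
      exact fun y hy => div_ne_zero (hne0 y hy) (hne1 y hy)
    have hG : ContinuousOn (fun y => scaleExponent q₁ q₂ c y) (Set.Ioo (0:ℝ) 1) := by
      unfold scaleExponent
      exact ((c1.add c2).add c3).sub continuousOn_const
    exact Real.continuous_exp.comp_continuousOn (continuousOn_const.mul hG)
  have hint : ∀ a b : ℝ, 0 < a → b < 1 → a ≤ b → IntervalIntegrable f MeasureTheory.volume a b := by
    intro a b ha hb hab
    apply (hcont.mono _).intervalIntegrable
    rw [Set.uIcc_of_le hab]
    intro z hz
    exact ⟨lt_of_lt_of_le ha hz.1, lt_of_le_of_lt hz.2 hb⟩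
  -- main bound: for x ∈ (0, δ), A*(log δ - log x) ≤ ∫ x..c f
  have main : ∀ x ∈ Set.Ioo (0:ℝ) δ, A * (Real.log δ - Real.log x) ≤ ∫ y in x..c, f y := by
    rintro x ⟨hx0, hxδ⟩
    have hint1 : IntervalIntegrable f MeasureTheory.volume x δ :=
      hint x δ hx0 (lt_of_le_of_lt hδc hc1) hxδ.le
    have hint2 : IntervalIntegrable f MeasureTheory.volume δ c :=
      hint δ c hδpos hc1 hδc
    have hsplit : (∫ y in x..δ, f y) + ∫ y in δ..c, f y = ∫ y in x..c, f y :=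
      integral_add_adjacent_intervals hint1 hint2
    have h3 : 0 ≤ ∫ y in δ..c, f y :=
      integral_nonneg hδc (fun u _ => (hfpos u).le)
    have hintAy : IntervalIntegrable (fun y => A / y) MeasureTheory.volume x δ := by
      apply ContinuousOn.intervalIntegrable
      apply continuousOn_const.div continuousOn_id
      intro z hz
      rw [Set.uIcc_of_le hxδ.le] at hz
      exact ne_of_gt (lt_of_lt_of_le hx0 hz.1)
    have h2 : ∫ y in x..δ, A / y ≤ ∫ y in x..δ, f y := by
      apply integral_mono_on hxδ.le hintAy hint1
      intro u hu
      exact key u ⟨lt_of_lt_of_le hx0 hu.1, hu.2⟩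
    have h1 : ∫ y in x..δ, A / y = A * (Real.log δ - Real.log x) := by
      have h0 : (0:ℝ) ∉ Set.uIcc x δ := by
        rw [Set.uIcc_of_le hxδ.le]
        intro h; exact absurd h.1 (not_le.mpr hx0)
      have : ∫ y in x..δ, A / y = A * ∫ y in x..δ, 1 / y := by
        rw [← intervalIntegral.integral_const_mul]
        congr 1; ext y; ring
      rw [this, integral_one_div h0, Real.log_div (ne_of_gt hδpos) (ne_of_gt hx0)]
    linarith
  -- tendsto of lower bound
  have hlb : Tendsto (fun x : ℝ => A * (Real.log δ - Real.log x)) (nhdsWithin 0 (Set.Ioi 0)) atTop := by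
    apply Tendsto.const_mul_atTop hApos
    have hneg : Tendsto (fun x : ℝ => - Real.log x) (nhdsWithin 0 (Set.Ioi 0)) atTop :=
      tendsto_neg_atBot_atTop.comp Real.tendsto_log_nhdsGT_zero
    have := tendsto_atTop_add_const_left (nhdsWithin (0:ℝ) (Set.Ioi 0)) (Real.log δ) hneg
    simpa [sub_eq_add_neg] using this
  have hmem : Set.Ioo (0:ℝ) δ ∈ nhdsWithin (0:ℝ) (Set.Ioi 0) :=
    Ioo_mem_nhdsGT_of_mem ⟨le_refl 0, hδpos⟩
  have h₁ : Tendsto (fun x : ℝ => ∫ y in x..c, f y) (nhdsWithin 0 (Set.Ioi 0)) atTop := by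
    apply tendsto_atTop_mono' _ _ hlb
    filter_upwards [hmem] with x hx
    exact main x hx
  refine ⟨h₁, ?_⟩
  have : (fun x : ℝ => ∫ y in c..x, f y) = fun x => -(∫ y in x..c, f y) := by
    ext x; rw [integral_symm]
  rw [this]
  exact tendsto_neg_atTop_atBot.comp h₁
end

section
/- Let T > 0, r ∈ ℝ, σ > 0, μ₁ > μ₂, κ > 0, and let η : [0,1] → ℝ be either η ≡ 0 or η(p) = −(q₁ + q₂)p + q₂ for some constants q₁, q₂ > 0. Define θ(p) := (μ₁ − μ₂)p + μ₂ and β(p) := ((μ₁ − μ₂)/σ) p(1 − p), and let c be the unique bounded solution, C^{1,2} on [0,T) × (0,1) and continuous up to {T} × (0,1), of the Cauchy problem ∂_t c + ( η(p) − β(p)(θ(p) − r)/σ ) ∂_p c + (β(p)²/2) ∂_{pp} c + κ ((θ(p) − r)/σ)² = 0 with c(T, ·) = 0. Then the partial derivative ∂_p c is bounded on [0,T) × (0,1). -/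
open Filter Set

/-- The estimated drift `θ(p) = (μ₁ - μ₂) p + μ₂`. -/
noncomputable def filterTheta (μ₁ μ₂ : ℝ) (p : ℝ) : ℝ := (μ₁ - μ₂) * p + μ₂

/-- The filter volatility `β(p) = ((μ₁ - μ₂)/σ) p (1 - p)`. -/
noncomputable def filterBeta (μ₁ μ₂ σ : ℝ) (p : ℝ) : ℝ := (μ₁ - μ₂) / σ * (p * (1 - p))

/-- `c` is a solution, `C^{1,2}` on `[0,T) × (0,1)` and continuous up to the boundary
`{T} × (0,1)`, of the degenerate Cauchy problem
`∂_t c + (η(p) - β(p)(θ(p) - r)/σ) ∂_p c + (β(p)²/2) ∂_{pp} c + κ ((θ(p) - r)/σ)² = 0`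
with terminal condition `c(T, ·) = 0`.  The functions `ct, cp, cpp` witness the
(continuous) partial derivatives `∂_t c`, `∂_p c`, `∂_{pp} c`. -/
def SolvesFirstCauchy (T r σ μ₁ μ₂ κ : ℝ) (η : ℝ → ℝ) (c : ℝ → ℝ → ℝ) : Prop :=
  ∃ ct cp cpp : ℝ → ℝ → ℝ,
    (∀ t ∈ Ico (0 : ℝ) T, ∀ p ∈ Ioo (0 : ℝ) 1,
      HasDerivWithinAt (fun s => c s p) (ct t p) (Ico (0 : ℝ) T) t ∧
      HasDerivAt (fun q => c t q) (cp t p) p ∧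
      HasDerivAt (fun q => cp t q) (cpp t p) p) ∧
    ContinuousOn (fun z : ℝ × ℝ => ct z.1 z.2) (Ico (0 : ℝ) T ×ˢ Ioo (0 : ℝ) 1) ∧
    ContinuousOn (fun z : ℝ × ℝ => cp z.1 z.2) (Ico (0 : ℝ) T ×ˢ Ioo (0 : ℝ) 1) ∧
    ContinuousOn (fun z : ℝ × ℝ => cpp z.1 z.2) (Ico (0 : ℝ) T ×ˢ Ioo (0 : ℝ) 1) ∧
    ContinuousOn (fun z : ℝ × ℝ => c z.1 z.2) (Icc (0 : ℝ) T ×ˢ Ioo (0 : ℝ) 1) ∧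
    (∀ t ∈ Ico (0 : ℝ) T, ∀ p ∈ Ioo (0 : ℝ) 1,
      ct t p
        + (η p - filterBeta μ₁ μ₂ σ p * ((filterTheta μ₁ μ₂ p - r) / σ)) * cp t p
        + filterBeta μ₁ μ₂ σ p ^ 2 / 2 * cpp t p
        + κ * ((filterTheta μ₁ μ₂ p - r) / σ) ^ 2 = 0) ∧
    (∀ p ∈ Ioo (0 : ℝ) 1, c T p = 0)

/-- `η` is either identically `0` (unknown constant drift) or of the mean-reverting
form `η(p) = -(q₁ + q₂) p + q₂` with `q₁, q₂ > 0` (regime-switching drift). -/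
def AdmissibleFilterDrift (η : ℝ → ℝ) : Prop :=
  (∀ p, η p = 0) ∨ ∃ q₁ q₂ : ℝ, 0 < q₁ ∧ 0 < q₂ ∧ ∀ p, η p = -(q₁ + q₂) * p + q₂


/-!
The bound is a Lipschitz estimate in `p`, uniform in `t`, proved by a comparison principle with
the space variable doubled. Write the equation as `∂ₜc + A ∂ₚc + B ∂ₚₚc + g = 0` and let
`φ(p) = -log p - log (1 - p)`. For `ε > 0` the penalized gap
`Φ(t,p,q) = c(t,p) - c(t,q) - (p - q) e^{λ(T-t)} - ε (φ p + φ q) e^{γ(T-t)}` is `≤ 0` for `q ≤ p`: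
otherwise it has a positive maximum, which `φ` keeps away from `p, q ∈ {0, 1}` (`c` is bounded),
the terminal condition keeps away from `t = T`, and which is not on the diagonal `p = q`.
At such a maximum `∂ₚc(t,p)` and `∂ₚc(t,q)` both equal `e^{λ(T-t)}` up to `ε`-terms, while
`∂ₚₚc(t,p) ≤ O(ε)` and `∂ₚₚc(t,q) ≥ -O(ε)`; subtracting the equation at `q` from the one at `p`
contradicts `∂ₜΦ ≤ 0` once `λ = Lip A + Lip g` and `γ` dominates `A φ'` and `B φ''`. These are
bounded above because the drift `η` points inwards and `β² ∼ p²(1-p)²` vanishes quadratically at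
the boundary. Since the test function is linear in `(p, q)`, no regularity of `√B` is needed.
Letting `ε → 0` and applying the same to `-c` shows that `c(t, ·)` is `e^{λT}`-Lipschitz.
-/

open Topology Real
open scoped NNReal

noncomputable def logBarrier (p : ℝ) : ℝ := -log p - log (1 - p)

noncomputable def logBarrierDeriv (p : ℝ) : ℝ := (1 - p)⁻¹ - p⁻¹

noncomputable def logBarrierDeriv2 (p : ℝ) : ℝ := (p ^ 2)⁻¹ + ((1 - p) ^ 2)⁻¹

section LogBarrier

variable {p : ℝ}

lemma one_le_logBarrier (hp : p ∈ Ioo (0 : ℝ) 1) : 1 ≤ logBarrier p := by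
  have h₀ := log_le_sub_one_of_pos hp.1
  have h₁ := log_le_sub_one_of_pos (sub_pos.2 hp.2)
  unfold logBarrier
  linarith

lemma le_logBarrier_of_min_le_exp {R : ℝ} (hp : p ∈ Ioo (0 : ℝ) 1)
    (hR : min p (1 - p) ≤ exp (-R)) : R ≤ logBarrier p := by
  have h₀ : log p ≤ 0 := log_nonpos hp.1.le hp.2.le
  have h₁ : log (1 - p) ≤ 0 := log_nonpos (sub_pos.2 hp.2).le (by linarith [hp.1])
  unfold logBarrier
  rcases min_le_iff.1 hR with h | h
  · linarith [(log_le_iff_le_exp hp.1).2 h]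
  · linarith [(log_le_iff_le_exp (sub_pos.2 hp.2)).2 h]

lemma hasDerivAt_logBarrier (hp : p ∈ Ioo (0 : ℝ) 1) :
    HasDerivAt logBarrier (logBarrierDeriv p) p := by
  have h₁ : HasDerivAt (fun q : ℝ => log (1 - q)) ((1 - p)⁻¹ * -1) p :=
    (hasDerivAt_log (sub_pos.2 hp.2).ne').comp p ((hasDerivAt_id p).const_sub 1)
  exact ((hasDerivAt_log hp.1.ne').neg.sub h₁).congr_deriv (by rw [logBarrierDeriv]; ring)

lemma hasDerivAt_logBarrierDeriv (hp : p ∈ Ioo (0 : ℝ) 1) :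
    HasDerivAt logBarrierDeriv (logBarrierDeriv2 p) p := by
  have h₁ : HasDerivAt (fun q : ℝ => (1 - q)⁻¹) (-((1 - p) ^ 2)⁻¹ * -1) p :=
    (hasDerivAt_inv (sub_pos.2 hp.2).ne').comp p ((hasDerivAt_id p).const_sub 1)
  exact (h₁.sub (hasDerivAt_inv hp.1.ne')).congr_deriv (by rw [logBarrierDeriv2]; ring)

lemma continuousOn_logBarrier : ContinuousOn logBarrier (Ioo 0 1) :=
  fun _ hp => (hasDerivAt_logBarrier hp).continuousAt.continuousWithinAt

end LogBarrier

theorem IsLocalMax.deriv2_nonpos {f f' : ℝ → ℝ} {a d : ℝ} (hmax : IsLocalMax f a)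
    (hf : ∀ᶠ x in 𝓝 a, HasDerivAt f (f' x) x) (hf' : HasDerivAt f' d a) : d ≤ 0 := by
  by_contra! hd
  have hderiv : deriv f =ᶠ[𝓝 a] f' := hf.mono fun x hx => hx.deriv
  have hfa : HasDerivAt f (f' a) a := hf.self_of_nhds
  -- by the second-derivative test `a` is also a local minimum, so `f` is locally constant
  have hmin : IsLocalMin f a :=
    isLocalMin_of_deriv_deriv_pos (by rwa [hderiv.deriv_eq, hf'.deriv])
      (by rw [hderiv.eq_of_nhds]; exact hmax.hasDerivAt_eq_zero hfa) hfa.continuousAt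
  have hconst : f =ᶠ[𝓝 a] fun _ => f a := (hmax.and hmin).mono fun x hx => le_antisymm hx.1 hx.2
  have hzero : (fun _ => (0 : ℝ)) =ᶠ[𝓝 a] f' := by
    filter_upwards [hconst.deriv, hderiv] with x h₁ h₂
    rw [← h₂, h₁, deriv_const]
  exact hd.ne' ((hf'.congr_of_eventuallyEq hzero).unique (hasDerivAt_const a 0))

theorem IsLocalMax.hasDerivAt_eq_and_le {u u' v v' : ℝ → ℝ} {a u'' v'' : ℝ}
    (hmax : IsLocalMax (fun x => u x - v x) a)
    (hu : ∀ᶠ x in 𝓝 a, HasDerivAt u (u' x) x) (hv : ∀ᶠ x in 𝓝 a, HasDerivAt v (v' x) x)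
    (hu' : HasDerivAt u' u'' a) (hv' : HasDerivAt v' v'' a) : u' a = v' a ∧ u'' ≤ v'' := by
  have hdiff : ∀ᶠ x in 𝓝 a, HasDerivAt (fun x => u x - v x) (u' x - v' x) x :=
    hu.and hv |>.mono fun x hx => hx.1.sub hx.2
  refine ⟨sub_eq_zero.1 (hmax.hasDerivAt_eq_zero hdiff.self_of_nhds), ?_⟩
  linarith [hmax.deriv2_nonpos hdiff (hu'.sub hv')]

theorem IsLocalMax.hasDerivAt_eq_and_le_logBarrier {u u' : ℝ → ℝ} {a u'' C m k : ℝ}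
    (hmax : IsLocalMax (fun x => u x - (C + m * x + k * logBarrier x)) a)
    (ha : a ∈ Ioo (0 : ℝ) 1) (hu : ∀ x ∈ Ioo (0 : ℝ) 1, HasDerivAt u (u' x) x)
    (hu' : HasDerivAt u' u'' a) :
    u' a = m + k * logBarrierDeriv a ∧ u'' ≤ k * logBarrierDeriv2 a := by
  have hnhds : Ioo (0 : ℝ) 1 ∈ 𝓝 a := Ioo_mem_nhds ha.1 ha.2
  refine hmax.hasDerivAt_eq_and_le (eventually_of_mem hnhds hu) (eventually_of_mem hnhds ?_) hu'
    ((hasDerivAt_logBarrierDeriv ha).const_mul k |>.const_add m)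
  intro x hx
  exact (((hasDerivAt_id x).const_mul m).const_add C |>.add
    ((hasDerivAt_logBarrier hx).const_mul k)).congr_deriv (by ring)

theorem HasDerivWithinAt.nonpos_of_isMaxOn_Ico {f : ℝ → ℝ} {D a b : ℝ} (hab : a < b)
    (hf : HasDerivWithinAt f D (Ico a b) a) (hmax : IsMaxOn f (Ico a b) a) : D ≤ 0 := by
  have hy : (b - a) / 2 ∈ posTangentConeAt (Ico a b) a :=
    mem_posTangentConeAt_of_segment_subset <| by
      rw [segment_eq_Icc (by linarith)]
      exact Icc_subset_Ico_right (by linarith)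
  have h := hmax.localize.hasFDerivWithinAt_nonpos hf.hasFDerivWithinAt hy
  simp only [ContinuousLinearMap.toSpanSingleton_apply, smul_eq_mul] at h
  exact nonpos_of_mul_nonpos_right h (by linarith)

lemma hasDerivAt_exp_mul_sub (a T t : ℝ) :
    HasDerivAt (fun s => exp (a * (T - s))) (-(a * exp (a * (T - t)))) t := by
  have h : HasDerivAt (fun s => a * (T - s)) (-a) t := by
    simpa using ((hasDerivAt_id t).const_sub T).const_mul a
  exact h.exp.congr_deriv (by ring)

lemma LipschitzOnWith.sub_le_mul_sub {f : ℝ → ℝ} {K : ℝ≥0} {s : Set ℝ}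
    (hf : LipschitzOnWith K f s) {x y : ℝ} (hx : x ∈ s) (hy : y ∈ s) (hyx : y ≤ x) :
    f x - f y ≤ K * (x - y) := by
  have h := hf.dist_le_mul x hx y hy
  rw [dist_eq, dist_eq, abs_of_nonneg (sub_nonneg.2 hyx)] at h
  exact (le_abs_self _).trans h

lemma lipschitzOnWith_of_abs_sub_le {f : ℝ → ℝ} {L : ℝ≥0} {s : Set ℝ}
    (h : ∀ x ∈ s, ∀ y ∈ s, y ≤ x → |f x - f y| ≤ L * (x - y)) : LipschitzOnWith L f s := by
  refine LipschitzOnWith.of_dist_le_mul fun x hx y hy => ?_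
  rw [dist_eq, dist_eq]
  rcases le_total y x with hyx | hxy
  · rw [abs_of_nonneg (sub_nonneg.2 hyx)]
    exact h x hx y hy hyx
  · rw [abs_sub_comm, abs_sub_comm x, abs_of_nonneg (sub_nonneg.2 hxy)]
    exact h y hy x hx hxy

lemma exists_lipschitzOnWith_Ioo_of_contDiff {f : ℝ → ℝ} (hf : ContDiff ℝ 1 f) :
    ∃ K, LipschitzOnWith K f (Ioo 0 1) :=
  (hf.contDiffOn.exists_lipschitzOnWith one_ne_zero (convex_Icc 0 1) isCompact_Icc).imp
    fun _ hK => hK.mono Ioo_subset_Icc_self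

lemma mul_add_mul_le_of_touching {a b u' u'' m k K KB φ' φ'' : ℝ} (hb : 0 ≤ b) (hk : 0 ≤ k)
    (hu' : u' = m + k * φ') (hu'' : u'' ≤ k * φ'') (haφ : a * φ' ≤ K) (hbφ : b * φ'' ≤ KB) :
    a * u' + b * u'' ≤ a * m + k * (K + KB) := by
  have h₁ : b * u'' ≤ b * (k * φ'') := mul_le_mul_of_nonneg_left hu'' hb
  have h₂ : k * (a * φ') ≤ k * K := mul_le_mul_of_nonneg_left haφ hk
  have h₃ : k * (b * φ'') ≤ k * KB := mul_le_mul_of_nonneg_left hbφ hk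
  rw [hu']
  linarith

/-- `ct`, `cp`, `cpp` stand for `∂ₜc`, `∂ₚc`, `∂ₚₚc`. -/
structure IsClassicalSolution (T : ℝ) (A B g : ℝ → ℝ) (c ct cp cpp : ℝ → ℝ → ℝ) : Prop where
  hasDerivWithinAt_time : ∀ t ∈ Ico (0 : ℝ) T, ∀ p ∈ Ioo (0 : ℝ) 1,
    HasDerivWithinAt (fun s => c s p) (ct t p) (Ico (0 : ℝ) T) t
  hasDerivAt_space : ∀ t ∈ Ico (0 : ℝ) T, ∀ p ∈ Ioo (0 : ℝ) 1, HasDerivAt (c t) (cp t p) p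
  hasDerivAt_space2 : ∀ t ∈ Ico (0 : ℝ) T, ∀ p ∈ Ioo (0 : ℝ) 1, HasDerivAt (cp t) (cpp t p) p
  continuousOn : ContinuousOn (fun z : ℝ × ℝ => c z.1 z.2) (Icc (0 : ℝ) T ×ˢ Ioo (0 : ℝ) 1)
  eq : ∀ t ∈ Ico (0 : ℝ) T, ∀ p ∈ Ioo (0 : ℝ) 1,
    ct t p + A p * cp t p + B p * cpp t p + g p = 0
  terminal : ∀ p ∈ Ioo (0 : ℝ) 1, c T p = 0

structure CoefficientBounds (A B g : ℝ → ℝ) (LA Lg K KB : ℝ≥0) : Prop where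
  diffusion_nonneg : ∀ p ∈ Ioo (0 : ℝ) 1, 0 ≤ B p
  lipschitzOnWith_drift : LipschitzOnWith LA A (Ioo 0 1)
  lipschitzOnWith_source : LipschitzOnWith Lg g (Ioo 0 1)
  drift_mul_logBarrierDeriv_le : ∀ p ∈ Ioo (0 : ℝ) 1, A p * logBarrierDeriv p ≤ K
  diffusion_mul_logBarrierDeriv2_le : ∀ p ∈ Ioo (0 : ℝ) 1, B p * logBarrierDeriv2 p ≤ KB

noncomputable def penalizedGap (c : ℝ → ℝ → ℝ) (T lam gam ε t p q : ℝ) : ℝ :=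
  c t p - c t q - (p - q) * exp (lam * (T - t))
    - ε * (logBarrier p + logBarrier q) * exp (gam * (T - t))

section Comparison

variable {T : ℝ} {A B g : ℝ → ℝ} {c ct cp cpp : ℝ → ℝ → ℝ} {LA Lg K KB : ℝ≥0}

lemma IsClassicalSolution.neg (h : IsClassicalSolution T A B g c ct cp cpp) :
    IsClassicalSolution T A B (-g) (-c) (-ct) (-cp) (-cpp) where
  hasDerivWithinAt_time t ht p hp := (h.hasDerivWithinAt_time t ht p hp).neg
  hasDerivAt_space t ht p hp := (h.hasDerivAt_space t ht p hp).neg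
  hasDerivAt_space2 t ht p hp := (h.hasDerivAt_space2 t ht p hp).neg
  continuousOn := h.continuousOn.neg
  eq t ht p hp := by
    simp only [Pi.neg_apply]
    linarith [h.eq t ht p hp]
  terminal p hp := by simp [h.terminal p hp]

lemma CoefficientBounds.neg (h : CoefficientBounds A B g LA Lg K KB) :
    CoefficientBounds A B (-g) LA Lg K KB where
  diffusion_nonneg := h.diffusion_nonneg
  lipschitzOnWith_drift := h.lipschitzOnWith_drift
  lipschitzOnWith_source := LipschitzOnWith.of_dist_le_mul fun x hx y hy => by
    simpa only [Pi.neg_apply, dist_neg_neg] using h.lipschitzOnWith_source.dist_le_mul x hx y hy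
  drift_mul_logBarrierDeriv_le := h.drift_mul_logBarrierDeriv_le
  diffusion_mul_logBarrierDeriv2_le := h.diffusion_mul_logBarrierDeriv2_le

lemma IsClassicalSolution.hasDerivWithinAt_penalizedGap_time
    (hsol : IsClassicalSolution T A B g c ct cp cpp) {lam gam ε t p q : ℝ}
    (ht : t ∈ Ico (0 : ℝ) T) (hp : p ∈ Ioo (0 : ℝ) 1) (hq : q ∈ Ioo (0 : ℝ) 1) :
    HasDerivWithinAt (fun s => penalizedGap c T lam gam ε s p q)
      (ct t p - ct t q + (p - q) * (lam * exp (lam * (T - t)))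
        + ε * (logBarrier p + logBarrier q) * (gam * exp (gam * (T - t)))) (Ico (0 : ℝ) T) t := by
  have h := (((hsol.hasDerivWithinAt_time t ht p hp).sub
    (hsol.hasDerivWithinAt_time t ht q hq)).sub
    ((hasDerivAt_exp_mul_sub lam T t).const_mul (p - q)).hasDerivWithinAt).sub
    ((hasDerivAt_exp_mul_sub gam T t).const_mul
      (ε * (logBarrier p + logBarrier q))).hasDerivWithinAt
  exact h.congr_deriv (by ring)

lemma IsClassicalSolution.continuousOn_penalizedGap (hsol : IsClassicalSolution T A B g c ct cp cpp)
    (lam gam ε : ℝ) :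
    ContinuousOn (fun z : ℝ × ℝ × ℝ => penalizedGap c T lam gam ε z.1 z.2.1 z.2.2)
      (Icc (0 : ℝ) T ×ˢ (Ioo (0 : ℝ) 1 ×ˢ Ioo (0 : ℝ) 1)) := by
  set S := Icc (0 : ℝ) T ×ˢ (Ioo (0 : ℝ) 1 ×ˢ Ioo (0 : ℝ) 1)
  have hc₁ := hsol.continuousOn.comp (continuous_fst.prodMk continuous_snd.fst).continuousOn
    fun z (hz : z ∈ S) => ⟨hz.1, hz.2.1⟩
  have hc₂ := hsol.continuousOn.comp (continuous_fst.prodMk continuous_snd.snd).continuousOn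
    fun z (hz : z ∈ S) => ⟨hz.1, hz.2.2⟩
  have hφ₁ := continuousOn_logBarrier.comp continuous_snd.fst.continuousOn
    fun z (hz : z ∈ S) => hz.2.1
  have hφ₂ := continuousOn_logBarrier.comp continuous_snd.snd.continuousOn
    fun z (hz : z ∈ S) => hz.2.2
  exact ((hc₁.sub hc₂).sub (by fun_prop)).sub
    ((continuousOn_const.mul (hφ₁.add hφ₂)).mul (by fun_prop))

lemma penalizedGap_self_neg {lam gam ε t p : ℝ} (hε : 0 < ε) (hp : p ∈ Ioo (0 : ℝ) 1) :
    penalizedGap c T lam gam ε t p p < 0 := by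
  have := one_le_logBarrier hp
  have : 0 < ε * (logBarrier p + logBarrier p) * exp (gam * (T - t)) := by positivity
  simp only [penalizedGap]
  linarith

lemma IsClassicalSolution.penalizedGap_terminal_neg (hsol : IsClassicalSolution T A B g c ct cp cpp)
    {lam gam ε p q : ℝ} (hε : 0 < ε) (hp : p ∈ Ioo (0 : ℝ) 1) (hq : q ∈ Ioo (0 : ℝ) 1)
    (hqp : q ≤ p) : penalizedGap c T lam gam ε T p q < 0 := by
  have := one_le_logBarrier hp
  have := one_le_logBarrier hq
  have : 0 < ε * (logBarrier p + logBarrier q) := by positivity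
  simp only [penalizedGap, hsol.terminal p hp, hsol.terminal q hq, sub_self, mul_zero, exp_zero]
  linarith

lemma penalizedGap_neg_of_min_le_exp {M lam gam ε t p q : ℝ}
    (hbdd : ∀ t ∈ Icc (0 : ℝ) T, ∀ p ∈ Ioo (0 : ℝ) 1, |c t p| ≤ M) (hgam : 0 ≤ gam) (hε : 0 < ε)
    (ht : t ∈ Icc (0 : ℝ) T) (hp : p ∈ Ioo (0 : ℝ) 1) (hq : q ∈ Ioo (0 : ℝ) 1) (hqp : q ≤ p)
    (hnear : min q (1 - p) ≤ exp (-(2 * M / ε))) : penalizedGap c T lam gam ε t p q < 0 := by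
  have hcp := abs_le.1 (hbdd t ht p hp)
  have hcq := abs_le.1 (hbdd t ht q hq)
  have hw : 2 * M / ε + 1 ≤ logBarrier p + logBarrier q := by
    rcases min_le_iff.1 hnear with h | h
    · linarith [le_logBarrier_of_min_le_exp hq ((min_le_left _ _).trans h), one_le_logBarrier hp]
    · linarith [le_logBarrier_of_min_le_exp hp ((min_le_right _ _).trans h), one_le_logBarrier hq]
  have hpen : 2 * M + ε ≤ ε * (logBarrier p + logBarrier q) * exp (gam * (T - t)) :=
    calc 2 * M + ε = ε * (2 * M / ε + 1) := by field_simp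
      _ ≤ ε * (logBarrier p + logBarrier q) := mul_le_mul_of_nonneg_left hw hε.le
      _ ≤ _ := le_mul_of_one_le_right
          (mul_nonneg hε.le (by linarith [one_le_logBarrier hp, one_le_logBarrier hq]))
          (one_le_exp (mul_nonneg hgam (sub_nonneg.2 ht.2)))
  have : 0 ≤ (p - q) * exp (lam * (T - t)) := mul_nonneg (sub_nonneg.2 hqp) (exp_pos _).le
  simp only [penalizedGap]
  linarith

theorem IsClassicalSolution.not_isMax_penalizedGap (hsol : IsClassicalSolution T A B g c ct cp cpp)
    (hcoef : CoefficientBounds A B g LA Lg K KB) {ε t p q : ℝ} (hε : 0 < ε)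
    (ht : t ∈ Ico (0 : ℝ) T) (hp : p ∈ Ioo (0 : ℝ) 1) (hq : q ∈ Ioo (0 : ℝ) 1) (hqp : q ≤ p)
    (htime : IsMaxOn (fun s => penalizedGap c T (LA + Lg) (K + KB + 1) ε s p q) (Ico t T) t)
    (hpmax : IsLocalMax (fun x => penalizedGap c T (LA + Lg) (K + KB + 1) ε t x q) p)
    (hqmax : IsLocalMax (fun y => penalizedGap c T (LA + Lg) (K + KB + 1) ε t p y) q) : False := by
  set L := exp ((LA + Lg) * (T - t))
  set E := exp ((K + KB + 1) * (T - t))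
  have hL : 1 ≤ L := one_le_exp (mul_nonneg (by positivity) (by linarith [ht.2]))
  have hk : 0 < ε * E := mul_pos hε (exp_pos _)
  have htime' := ((hsol.hasDerivWithinAt_penalizedGap_time ht hp hq).mono
    (Ico_subset_Ico_left ht.1)).nonpos_of_isMaxOn_Ico ht.2 htime
  obtain ⟨hcp_p, hcpp_p⟩ := IsLocalMax.hasDerivAt_eq_and_le_logBarrier (m := L) (k := ε * E)
    (C := c t q - q * L + ε * E * logBarrier q)
    (by convert hpmax using 2; simp only [penalizedGap]; ring)
    hp (hsol.hasDerivAt_space t ht) (hsol.hasDerivAt_space2 t ht p hp)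
  obtain ⟨hcp_q, hcpp_q⟩ := IsLocalMax.hasDerivAt_eq_and_le_logBarrier (u := fun y => -c t y)
    (u' := fun y => -cp t y) (m := -L) (k := ε * E) (C := -c t p + p * L + ε * E * logBarrier p)
    (by convert hqmax using 2; simp only [penalizedGap]; ring)
    hq (fun x hx => (hsol.hasDerivAt_space t ht x hx).neg) (hsol.hasDerivAt_space2 t ht q hq).neg
  have hgen_p := mul_add_mul_le_of_touching (hcoef.diffusion_nonneg p hp) hk.le hcp_p hcpp_p
    (hcoef.drift_mul_logBarrierDeriv_le p hp) (hcoef.diffusion_mul_logBarrierDeriv2_le p hp)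
  have hgen_q := mul_add_mul_le_of_touching (hcoef.diffusion_nonneg q hq) hk.le hcp_q hcpp_q
    (hcoef.drift_mul_logBarrierDeriv_le q hq) (hcoef.diffusion_mul_logBarrierDeriv2_le q hq)
  have hA : (A p - A q) * L ≤ LA * (p - q) * L := mul_le_mul_of_nonneg_right
    (hcoef.lipschitzOnWith_drift.sub_le_mul_sub hp hq hqp) (by positivity)
  have hg : g p - g q ≤ Lg * (p - q) * L :=
    (hcoef.lipschitzOnWith_source.sub_le_mul_sub hp hq hqp).trans
      (le_mul_of_one_le_right (by positivity) hL)
  have hw : 2 * ((K + KB + 1) * (ε * E))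
      ≤ (logBarrier p + logBarrier q) * ((K + KB + 1) * (ε * E)) :=
    mul_le_mul_of_nonneg_right (by linarith [one_le_logBarrier hp, one_le_logBarrier hq])
      (by positivity)
  linarith [hsol.eq t ht p hp, hsol.eq t ht q hq]

theorem IsClassicalSolution.penalizedGap_nonpos (hsol : IsClassicalSolution T A B g c ct cp cpp)
    (hcoef : CoefficientBounds A B g LA Lg K KB) {M : ℝ}
    (hbdd : ∀ t ∈ Icc (0 : ℝ) T, ∀ p ∈ Ioo (0 : ℝ) 1, |c t p| ≤ M) {ε t p q : ℝ} (hε : 0 < ε)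
    (ht : t ∈ Icc (0 : ℝ) T) (hp : p ∈ Ioo (0 : ℝ) 1) (hq : q ∈ Ioo (0 : ℝ) 1) (hqp : q ≤ p) :
    penalizedGap c T (LA + Lg) (K + KB + 1) ε t p q ≤ 0 := by
  by_contra! hpos
  set Φ := penalizedGap c T (LA + Lg) (K + KB + 1) ε
  set δ := min (min q (1 - p)) (exp (-(2 * M / ε)))
  have hδ : 0 < δ := lt_min (lt_min hq.1 (sub_pos.2 hp.2)) (exp_pos _)
  set S := (Icc (0 : ℝ) T ×ˢ (Icc δ (1 - δ) ×ˢ Icc δ (1 - δ))) ∩ {z | z.2.2 ≤ z.2.1}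
  have hS : IsCompact S := (isCompact_Icc.prod (isCompact_Icc.prod isCompact_Icc)).inter_right
    (isClosed_le continuous_snd.snd continuous_snd.fst)
  have hIcc : Icc δ (1 - δ) ⊆ Ioo 0 1 := fun x hx => ⟨hδ.trans_le hx.1, by linarith [hx.2]⟩
  have hδ₁ : δ ≤ min q (1 - p) := min_le_left _ _
  have hqδ : δ ≤ q := hδ₁.trans (min_le_left _ _)
  have hpδ : p ≤ 1 - δ := by linarith [hδ₁.trans (min_le_right _ _)]
  have hz : (t, p, q) ∈ S := ⟨⟨ht, ⟨hqδ.trans hqp, hpδ⟩, ⟨hqδ, hqp.trans hpδ⟩⟩, hqp⟩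
  obtain ⟨⟨t₁, p₁, q₁⟩, ⟨⟨ht₁, hp₁, hq₁⟩, hqp₁⟩, hmax⟩ := hS.exists_isMaxOn ⟨_, hz⟩
    ((hsol.continuousOn_penalizedGap _ _ ε).mono fun z hz => ⟨hz.1.1, hIcc hz.1.2.1, hIcc hz.1.2.2⟩)
  replace hmax := isMaxOn_iff.1 hmax
  have hpos₁ : 0 < Φ t₁ p₁ q₁ := hpos.trans_le (hmax _ hz)
  -- the maximum cannot sit on the parts of the boundary of `S` where `Φ < 0`
  have htT : t₁ < T := by
    refine lt_of_le_of_ne ht₁.2 fun h => ?_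
    subst h
    exact (hsol.penalizedGap_terminal_neg hε (hIcc hp₁) (hIcc hq₁) hqp₁).not_gt hpos₁
  have hinterior : δ < q₁ ∧ p₁ < 1 - δ := by
    by_contra! h
    refine (penalizedGap_neg_of_min_le_exp hbdd (by positivity) hε ht₁ (hIcc hp₁) (hIcc hq₁) hqp₁
      ?_).not_gt hpos₁
    refine le_trans ?_ (min_le_right (min q (1 - p)) _)
    by_cases hq₁δ : δ < q₁
    · exact (min_le_right _ _).trans (by linarith [h hq₁δ])
    · exact (min_le_left _ _).trans (not_lt.1 hq₁δ)
  have hqp₁' : q₁ < p₁ := lt_of_le_of_ne hqp₁ fun h => by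
    subst h
    exact (penalizedGap_self_neg hε (hIcc hp₁)).not_gt hpos₁
  refine hsol.not_isMax_penalizedGap hcoef hε ⟨ht₁.1, htT⟩ (hIcc hp₁) (hIcc hq₁) hqp₁
    (isMaxOn_iff.2 fun s hs => hmax (s, p₁, q₁) ⟨⟨⟨ht₁.1.trans hs.1, hs.2.le⟩, hp₁, hq₁⟩, hqp₁⟩)
    (eventually_of_mem (Ioo_mem_nhds hqp₁' hinterior.2) fun x hx =>
      hmax (t₁, x, q₁) ⟨⟨ht₁, ⟨by linarith [hq₁.1, hx.1], hx.2.le⟩, hq₁⟩, hx.1.le⟩)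
    (eventually_of_mem (Ioo_mem_nhds hinterior.1 hqp₁') fun y hy =>
      hmax (t₁, p₁, y) ⟨⟨ht₁, hp₁, ⟨hy.1.le, by linarith [hp₁.2, hy.2]⟩⟩, hy.2.le⟩)

theorem IsClassicalSolution.sub_le_mul_sub (hsol : IsClassicalSolution T A B g c ct cp cpp)
    (hcoef : CoefficientBounds A B g LA Lg K KB) {M : ℝ}
    (hbdd : ∀ t ∈ Icc (0 : ℝ) T, ∀ p ∈ Ioo (0 : ℝ) 1, |c t p| ≤ M) {t p q : ℝ}
    (ht : t ∈ Icc (0 : ℝ) T) (hp : p ∈ Ioo (0 : ℝ) 1) (hq : q ∈ Ioo (0 : ℝ) 1) (hqp : q ≤ p) :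
    c t p - c t q ≤ exp ((LA + Lg) * T) * (p - q) := by
  set W := (logBarrier p + logBarrier q) * exp ((K + KB + 1) * (T - t))
  have hW : 0 < W := mul_pos (by linarith [one_le_logBarrier hp, one_le_logBarrier hq]) (exp_pos _)
  have hgap : c t p - c t q ≤ (p - q) * exp ((LA + Lg) * (T - t)) := by
    refine sub_nonpos.1 (le_of_forall_pos_le_add fun ε hε => ?_)
    have h := hsol.penalizedGap_nonpos hcoef hbdd (div_pos hε hW) ht hp hq hqp
    rw [penalizedGap, mul_assoc, div_mul_cancel₀ _ hW.ne'] at h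
    linarith
  have hexp : exp ((LA + Lg) * (T - t)) ≤ exp ((LA + Lg) * T) :=
    exp_le_exp.2 (mul_le_mul_of_nonneg_left (by linarith [ht.1]) (by positivity))
  calc c t p - c t q ≤ (p - q) * exp ((LA + Lg) * (T - t)) := hgap
    _ ≤ (p - q) * exp ((LA + Lg) * T) := mul_le_mul_of_nonneg_left hexp (sub_nonneg.2 hqp)
    _ = exp ((LA + Lg) * T) * (p - q) := mul_comm _ _

theorem IsClassicalSolution.lipschitzOnWith (hsol : IsClassicalSolution T A B g c ct cp cpp)
    (hcoef : CoefficientBounds A B g LA Lg K KB) {M : ℝ}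
    (hbdd : ∀ t ∈ Icc (0 : ℝ) T, ∀ p ∈ Ioo (0 : ℝ) 1, |c t p| ≤ M) {t : ℝ}
    (ht : t ∈ Icc (0 : ℝ) T) :
    LipschitzOnWith (exp ((LA + Lg) * T)).toNNReal (c t) (Ioo 0 1) := by
  have hbdd' : ∀ t ∈ Icc (0 : ℝ) T, ∀ p ∈ Ioo (0 : ℝ) 1, |(-c) t p| ≤ M := fun t ht p hp => by
    simpa only [Pi.neg_apply, abs_neg] using hbdd t ht p hp
  refine lipschitzOnWith_of_abs_sub_le fun p hp q hq hqp => ?_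
  have hlower := hsol.neg.sub_le_mul_sub hcoef.neg hbdd' ht hp hq hqp
  simp only [Pi.neg_apply] at hlower
  rw [coe_toNNReal _ (exp_pos _).le, abs_le]
  exact ⟨by linarith, hsol.sub_le_mul_sub hcoef hbdd ht hp hq hqp⟩

end Comparison

noncomputable def filterDrift (r σ μ₁ μ₂ : ℝ) (η : ℝ → ℝ) (p : ℝ) : ℝ :=
  η p - filterBeta μ₁ μ₂ σ p * ((filterTheta μ₁ μ₂ p - r) / σ)

noncomputable def filterDiffusion (σ μ₁ μ₂ : ℝ) (p : ℝ) : ℝ := filterBeta μ₁ μ₂ σ p ^ 2 / 2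

noncomputable def filterRunningCost (r σ μ₁ μ₂ κ : ℝ) (p : ℝ) : ℝ :=
  κ * ((filterTheta μ₁ μ₂ p - r) / σ) ^ 2

lemma SolvesFirstCauchy.isClassicalSolution {T r σ μ₁ μ₂ κ : ℝ} {η : ℝ → ℝ} {c : ℝ → ℝ → ℝ}
    (h : SolvesFirstCauchy T r σ μ₁ μ₂ κ η c) :
    ∃ ct cp cpp, IsClassicalSolution T (filterDrift r σ μ₁ μ₂ η) (filterDiffusion σ μ₁ μ₂)
      (filterRunningCost r σ μ₁ μ₂ κ) c ct cp cpp := by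
  obtain ⟨ct, cp, cpp, hder, -, -, -, hcont, hpde, hterm⟩ := h
  exact ⟨ct, cp, cpp, fun t ht p hp => (hder t ht p hp).1, fun t ht p hp => (hder t ht p hp).2.1,
    fun t ht p hp => (hder t ht p hp).2.2, hcont, hpde, hterm⟩

lemma AdmissibleFilterDrift.contDiff {η : ℝ → ℝ} (hη : AdmissibleFilterDrift η) :
    ContDiff ℝ 1 η := by
  rcases hη with h | ⟨q₁, q₂, -, -, h⟩
  · rw [funext h]
    exact contDiff_const
  · rw [funext h]
    fun_prop

lemma AdmissibleFilterDrift.exists_mul_logBarrierDeriv_le {η : ℝ → ℝ}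
    (hη : AdmissibleFilterDrift η) : ∃ K, ∀ p ∈ Ioo (0 : ℝ) 1, η p * logBarrierDeriv p ≤ K := by
  rcases hη with h | ⟨q₁, q₂, hq₁, hq₂, h⟩
  · exact ⟨0, fun p _ => by simp [h p]⟩
  · refine ⟨q₁ + q₂, fun p hp => ?_⟩
    have h₀ := hp.1
    have h₁ := sub_pos.2 hp.2
    have key : η p * logBarrierDeriv p = q₁ + q₂ - q₂ * (1 - p) / p - q₁ * p / (1 - p) := by
      rw [h p, logBarrierDeriv]
      field_simp
      ring
    have : 0 ≤ q₂ * (1 - p) / p := by positivity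
    have : 0 ≤ q₁ * p / (1 - p) := by positivity
    linarith

lemma filterDrift_mul_logBarrierDeriv {r σ μ₁ μ₂ p : ℝ} {η : ℝ → ℝ} (hp : p ∈ Ioo (0 : ℝ) 1) :
    filterDrift r σ μ₁ μ₂ η p * logBarrierDeriv p = η p * logBarrierDeriv p
      - (μ₁ - μ₂) / σ * (2 * p - 1) * ((filterTheta μ₁ μ₂ p - r) / σ) := by
  have h₀ := hp.1.ne'
  have h₁ := (sub_pos.2 hp.2).ne'
  rw [filterDrift, filterBeta, logBarrierDeriv]
  field_simp
  ring

lemma filterDiffusion_mul_logBarrierDeriv2 {σ μ₁ μ₂ p : ℝ} (hp : p ∈ Ioo (0 : ℝ) 1) :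
    filterDiffusion σ μ₁ μ₂ p * logBarrierDeriv2 p
      = ((μ₁ - μ₂) / σ) ^ 2 / 2 * ((1 - p) ^ 2 + p ^ 2) := by
  have h₀ := hp.1.ne'
  have h₁ := (sub_pos.2 hp.2).ne'
  rw [filterDiffusion, filterBeta, logBarrierDeriv2]
  field_simp

theorem AdmissibleFilterDrift.exists_coefficientBounds {η : ℝ → ℝ} (hη : AdmissibleFilterDrift η)
    (r σ μ₁ μ₂ κ : ℝ) : ∃ LA Lg K KB : ℝ≥0, CoefficientBounds (filterDrift r σ μ₁ μ₂ η)
      (filterDiffusion σ μ₁ μ₂) (filterRunningCost r σ μ₁ μ₂ κ) LA Lg K KB := by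
  obtain ⟨LA, hLA⟩ := exists_lipschitzOnWith_Ioo_of_contDiff (f := filterDrift r σ μ₁ μ₂ η)
    (hη.contDiff.sub (by unfold filterBeta filterTheta; fun_prop))
  obtain ⟨Lg, hLg⟩ := exists_lipschitzOnWith_Ioo_of_contDiff (f := filterRunningCost r σ μ₁ μ₂ κ)
    (by unfold filterRunningCost filterTheta; fun_prop)
  obtain ⟨Kη, hKη⟩ := hη.exists_mul_logBarrierDeriv_le
  obtain ⟨C, hC⟩ := isCompact_Icc.exists_bound_of_continuousOn (s := Icc (0 : ℝ) 1)
    (f := fun p => (μ₁ - μ₂) / σ * (2 * p - 1) * ((filterTheta μ₁ μ₂ p - r) / σ))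
    (by unfold filterTheta; fun_prop)
  refine ⟨LA, Lg, (Kη + C).toNNReal, (((μ₁ - μ₂) / σ) ^ 2 / 2).toNNReal,
    ⟨fun p _ => by unfold filterDiffusion; positivity, hLA, hLg, fun p hp => ?_, fun p hp => ?_⟩⟩
  · rw [filterDrift_mul_logBarrierDeriv hp]
    linarith [hKη p hp, neg_le_of_abs_le (hC p (Ioo_subset_Icc_self hp)), le_coe_toNNReal (Kη + C)]
  · rw [filterDiffusion_mul_logBarrierDeriv2 hp]
    have : (1 - p) ^ 2 + p ^ 2 ≤ 1 := by nlinarith [hp.1, hp.2]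
    exact (mul_le_of_le_one_right (by positivity) this).trans (le_coe_toNNReal _)

theorem first_cauchy_problem_deriv_bounded_general (T r σ μ₁ μ₂ κ : ℝ) (η : ℝ → ℝ)
    (hη : AdmissibleFilterDrift η)
    (c : ℝ → ℝ → ℝ) (hc : SolvesFirstCauchy T r σ μ₁ μ₂ κ η c)
    (hbdd : ∃ M : ℝ, ∀ t ∈ Icc (0 : ℝ) T, ∀ p ∈ Ioo (0 : ℝ) 1, |c t p| ≤ M) :
    ∃ M : ℝ, ∀ t ∈ Ico (0 : ℝ) T, ∀ p ∈ Ioo (0 : ℝ) 1,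
      |deriv (fun q => c t q) p| ≤ M := by
  obtain ⟨ct, cp, cpp, hsol⟩ := hc.isClassicalSolution
  obtain ⟨LA, Lg, K, KB, hcoef⟩ := hη.exists_coefficientBounds r σ μ₁ μ₂ κ
  obtain ⟨M, hM⟩ := hbdd
  refine ⟨exp ((LA + Lg) * T), fun t ht p hp => ?_⟩
  have h := norm_deriv_le_of_lipschitzOn (Ioo_mem_nhds hp.1 hp.2)
    (hsol.lipschitzOnWith hcoef hM (Ico_subset_Icc_self ht))
  rwa [coe_toNNReal _ (exp_pos _).le] at h

/-- The `p`-derivative of the (unique bounded) solution of the first degenerate Cauchy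
problem is bounded on `[0,T) × (0,1)`. -/
theorem first_cauchy_problem_deriv_bounded (T r σ μ₁ μ₂ κ : ℝ) (η : ℝ → ℝ)
    (hT : 0 < T) (hσ : 0 < σ) (hμ : μ₂ < μ₁) (hκ : 0 < κ)
    (hη : AdmissibleFilterDrift η)
    (c : ℝ → ℝ → ℝ) (hc : SolvesFirstCauchy T r σ μ₁ μ₂ κ η c)
    (hbdd : ∃ M : ℝ, ∀ t ∈ Icc (0 : ℝ) T, ∀ p ∈ Ioo (0 : ℝ) 1, |c t p| ≤ M) :
    ∃ M : ℝ, ∀ t ∈ Ico (0 : ℝ) T, ∀ p ∈ Ioo (0 : ℝ) 1,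
      |deriv (fun q => c t q) p| ≤ M :=
  first_cauchy_problem_deriv_bounded_general T r σ μ₁ μ₂ κ η hη c hc hbdd
end
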